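/- Let R be a commutative ring, I an ideal of R, n ≥ 3, and suppose SR_{n−1}(I) holds. Then every g ∈ SL(n,R) with g ≡ 1ₙ (mod I) can be written as g = a · z · b · h where: a is a product of at most 2(n−1) elementary transvections t_{ij}(s) with parameters s ∈ I; z = t_{1n}(1)⁻¹ · t_{n1}(r) · t_{1n}(1) for some r ∈ I; b is a product of at most 2(n−1) − 1 elementary transvections t_{ij}(s) with parameters s ∈ I; and h ≡ 1ₙ (mod I) has first row and first column equal to those of the identity matrix. In particular g is a product of at most 4(n−1) − 1 elementary transvections with parameter in I, one element of the form t_{1n}(1)⁻¹ t_{n1}(r) t_{1n}(1) with r ∈ I, and one element of the embedded principal congruence subgroup SL(n−1,R,I). (Corollary on the length of the Bass–Kolster decomposition, case Φ = A_{n−1}.) -/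

import Mathlib

open Matrix

/-- A row `a` is `I`-unimodular. -/
def IsIUnimodular {R : Type*} [CommRing R] (I : Ideal R) {n : ℕ} (a : Fin n → R) : Prop :=
  (∀ i : Fin n, (i : ℕ) = 0 → a i - 1 ∈ I) ∧ (∀ i : Fin n, (i : ℕ) ≠ 0 → a i ∈ I) ∧
    Ideal.span (Set.range a) = ⊤

/-- The relative stable range condition `SRₙ(I)`. -/
def SRCond {R : Type*} [CommRing R] (n : ℕ) (I : Ideal R) : Prop :=
  ∀ a : Fin (n + 1) → R, IsIUnimodular I a →
    ∃ b : Fin n → R, (∀ i, b i ∈ I) ∧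
      IsIUnimodular I (fun i : Fin n => a i.castSucc + a (Fin.last n) * b i)

/-- The elementary transvection `t_{ij}(ξ) = 1 + ξE_{ij}` as an element of `SL(n,R)`. -/
def tSL {R : Type*} [CommRing R] {n : ℕ} (i j : Fin n) (hij : i ≠ j) (ξ : R) :
    Matrix.SpecialLinearGroup (Fin n) R :=
  ⟨Matrix.transvection i j ξ, Matrix.det_transvection_of_ne i j hij ξ⟩

/-- `g ≡ 1 (mod I)`, entrywise. -/
def ModI {R : Type*} [CommRing R] (I : Ideal R) {n : ℕ} (g : Matrix (Fin n) (Fin n) R) : Prop :=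
  ∀ i j, g i j - (1 : Matrix (Fin n) (Fin n) R) i j ∈ I

/-- `x` is an elementary transvection with parameter in `I`. -/
def IsElemTransvectionI {R : Type*} [CommRing R] (I : Ideal R) {n : ℕ}
    (x : Matrix.SpecialLinearGroup (Fin n) R) : Prop :=
  ∃ i j, ∃ hij : i ≠ j, ∃ s ∈ I, x = tSL i j hij s

/-!
The first column `v` of `g` is an `I`-unimodular column. With `ℓ = n - 1` the last index,
`SR_{n-1}(I)` provides `n - 1` transvections `t_{iℓ}` after which `a = (v₀, …, v_{ℓ-1})` is an
`I`-unimodular row; writing `∑ cᵢ aᵢ = 1`, another `n - 1` transvections `t_{ℓj}` replace the last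
entry by `r = 1 - a₀ ∈ I`. Since the first and last entries now add up to `1`, `z(r)⁻¹` turns the
column into `(1, a₁, …, a_{ℓ-1}, 0)`, and `n - 2` transvections `t_{i0}` bring it to `e₀`. Finally
the first row is cleared by `n - 1` transvections `t_{0j}` whose parameters are read off the first
row of the inverse matrix. All transvections and `z(r)` lie in `SL(n, R, I)`, hence so does the
remaining factor `h`.
-/

open MatrixGroups

lemma single_add_update_zero {ι α : Type*} [DecidableEq ι] [AddZeroClass α] (x : ι → α) (a : ι) :
    Pi.single a (x a) + Function.update x a 0 = x := by
  ext i
  by_cases h : i = a <;> simp [h]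

section RankOne

variable {ι α : Type*} [Fintype ι] [DecidableEq ι]

lemma one_add_vecMulVec_mul_one_add_vecMulVec [Semiring α] {x y x' y' : ι → α}
    (h : y ⬝ᵥ x' = 0) :
    (1 + vecMulVec x y) * (1 + vecMulVec x' y') = 1 + vecMulVec x y + vecMulVec x' y' := by
  rw [mul_add, add_mul, add_mul, vecMulVec_mul_vecMulVec, h, zero_smul, vecMulVec_zero]
  simp only [mul_one, one_mul, add_zero]

lemma smul_eq_of_coe_eq_one_add_vecMulVec [CommRing α] {A : Matrix.SpecialLinearGroup ι α}
    {x y : ι → α} (hA : (A : Matrix ι ι α) = 1 + vecMulVec x y) (v : ι → α) :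
    A • v = v + (y ⬝ᵥ v) • x := by
  rw [Matrix.SpecialLinearGroup.smul_def, hA, smul_eq_mulVec, add_mulVec, one_mulVec,
    vecMulVec_mulVec, op_smul_eq_smul]

lemma smul_single_eq_single_iff [CommRing α] (g : Matrix.SpecialLinearGroup ι α) (p : ι) :
    g • (Pi.single p 1 : ι → α) = Pi.single p 1 ↔
      ∀ i, (g : Matrix ι ι α) i p = (1 : Matrix ι ι α) i p := by
  rw [Matrix.SpecialLinearGroup.smul_def, smul_eq_mulVec, mulVec_single_one, funext_iff]
  simp [one_apply, Pi.single_apply]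

end RankOne

section

variable {R : Type*} [CommRing R] (I : Ideal R) {n : ℕ}

def ElemLengthLE (k : ℕ) (g : SL(n, R)) : Prop :=
  ∃ L : List SL(n, R), L.length ≤ k ∧ (∀ x ∈ L, IsElemTransvectionI I x) ∧ L.prod = g

variable {I}

lemma ElemLengthLE.one : ElemLengthLE I 0 (1 : SL(n, R)) := ⟨[], le_rfl, by simp, rfl⟩

lemma elemLengthLE_tSL {i j : Fin n} (hij : i ≠ j) {s : R} (hs : s ∈ I) :
    ElemLengthLE I 1 (tSL i j hij s) :=
  ⟨[_], le_rfl, by simpa using ⟨i, j, hij, s, hs, rfl⟩, List.prod_singleton⟩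

lemma ElemLengthLE.mul {k l : ℕ} {g h : SL(n, R)} (hg : ElemLengthLE I k g)
    (hh : ElemLengthLE I l h) : ElemLengthLE I (k + l) (g * h) := by
  obtain ⟨L, hL, hLI, rfl⟩ := hg
  obtain ⟨L', hL', hL'I, rfl⟩ := hh
  refine ⟨L ++ L', by simp; omega, ?_, List.prod_append⟩
  simpa [or_imp, forall_and] using ⟨hLI, hL'I⟩

lemma tSL_inv (i j : Fin n) (hij : i ≠ j) (s : R) : (tSL i j hij s)⁻¹ = tSL i j hij (-s) :=
  inv_eq_of_mul_eq_one_right <| Subtype.ext <| by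
    rw [Matrix.SpecialLinearGroup.coe_mul, tSL, tSL, transvection_mul_transvection_same _ _ hij,
      add_neg_cancel, transvection_zero, Matrix.SpecialLinearGroup.coe_one]

lemma IsElemTransvectionI.inv {x : SL(n, R)} (hx : IsElemTransvectionI I x) :
    IsElemTransvectionI I x⁻¹ := by
  obtain ⟨i, j, hij, s, hs, rfl⟩ := hx
  exact ⟨i, j, hij, -s, I.neg_mem hs, tSL_inv i j hij s⟩

lemma ElemLengthLE.inv {k : ℕ} {g : SL(n, R)} (hg : ElemLengthLE I k g) :
    ElemLengthLE I k g⁻¹ := by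
  obtain ⟨L, hL, hLI, rfl⟩ := hg
  refine ⟨(L.map (·⁻¹)).reverse, by simpa using hL, ?_, (List.prod_inv_reverse L).symm⟩
  intro y hy
  obtain ⟨x, hx, rfl⟩ := List.mem_map.1 (List.mem_reverse.1 hy)
  exact (hLI x hx).inv

lemma coe_tSL_eq_one_add_vecMulVec (i j : Fin n) (hij : i ≠ j) (s : R) :
    (tSL i j hij s : Matrix (Fin n) (Fin n) R) =
      1 + vecMulVec (Pi.single i s) (Pi.single j 1) := by
  ext a b
  by_cases ha : a = i <;> by_cases hb : b = j <;>
    simp [tSL, transvection, ha, hb, vecMulVec_apply, Ne.symm]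

lemma coe_tSL_eq_one_add_vecMulVec' (i j : Fin n) (hij : i ≠ j) (s : R) :
    (tSL i j hij s : Matrix (Fin n) (Fin n) R) =
      1 + vecMulVec (Pi.single i 1) (Pi.single j s) := by
  ext a b
  by_cases ha : a = i <;> by_cases hb : b = j <;>
    simp [tSL, transvection, ha, hb, vecMulVec_apply, Ne.symm]

lemma tSL_smul (i j : Fin n) (hij : i ≠ j) (c : R) (v : Fin n → R) :
    tSL i j hij c • v = Function.update v i (v i + c * v j) := by
  rw [smul_eq_of_coe_eq_one_add_vecMulVec (coe_tSL_eq_one_add_vecMulVec i j hij c)]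
  ext k
  by_cases hk : k = i <;> simp [hk, mul_comm]

lemma exists_elemLengthLE_eq_one_add_vecMulVec_single {q : Fin n} {x : Fin n → R}
    (hx : ∀ i, x i ∈ I) {s : Finset (Fin n)} (hq : q ∉ s) (hs : ∀ i ∉ s, x i = 0) :
    ∃ A : SL(n, R), ElemLengthLE I s.card A ∧
      (A : Matrix (Fin n) (Fin n) R) = 1 + vecMulVec x (Pi.single q 1) := by
  induction s using Finset.induction_on generalizing x with
  | empty =>
    obtain rfl : x = 0 := funext fun i => hs i (Finset.notMem_empty i)
    exact ⟨1, .one, by simp⟩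
  | insert a s ha ih =>
    have haq : a ≠ q := fun h => hq (h ▸ Finset.mem_insert_self a s)
    obtain ⟨A, hA, hAx⟩ := ih (x := Function.update x a 0)
      (fun i => by by_cases h : i = a <;> simp [h, hx i])
      (fun h => hq (Finset.mem_insert_of_mem h))
      (fun i hi => by by_cases h : i = a <;> simp [h, hs i, hi])
    refine ⟨tSL a q haq (x a) * A, ?_, ?_⟩
    · rw [Finset.card_insert_of_notMem ha, add_comm]
      exact (elemLengthLE_tSL haq (hx a)).mul hA
    · rw [Matrix.SpecialLinearGroup.coe_mul, hAx, coe_tSL_eq_one_add_vecMulVec,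
        one_add_vecMulVec_mul_one_add_vecMulVec, add_assoc, ← add_vecMulVec,
        single_add_update_zero]
      simp [haq.symm, hs q hq]

lemma exists_elemLengthLE_eq_one_add_single_vecMulVec {p : Fin n} {y : Fin n → R}
    (hy : ∀ j, y j ∈ I) {s : Finset (Fin n)} (hp : p ∉ s) (hs : ∀ j ∉ s, y j = 0) :
    ∃ A : SL(n, R), ElemLengthLE I s.card A ∧
      (A : Matrix (Fin n) (Fin n) R) = 1 + vecMulVec (Pi.single p 1) y := by
  induction s using Finset.induction_on generalizing y with
  | empty =>
    obtain rfl : y = 0 := funext fun j => hs j (Finset.notMem_empty j)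
    exact ⟨1, .one, by simp⟩
  | insert a s ha ih =>
    have hpa : p ≠ a := fun h => hp (h ▸ Finset.mem_insert_self a s)
    obtain ⟨A, hA, hAy⟩ := ih (y := Function.update y a 0)
      (fun j => by by_cases h : j = a <;> simp [h, hy j])
      (fun h => hp (Finset.mem_insert_of_mem h))
      (fun j hj => by by_cases h : j = a <;> simp [h, hs j, hj])
    refine ⟨tSL p a hpa (y a) * A, ?_, ?_⟩
    · rw [Finset.card_insert_of_notMem ha, add_comm]
      exact (elemLengthLE_tSL hpa (hy a)).mul hA
    · rw [Matrix.SpecialLinearGroup.coe_mul, hAy, coe_tSL_eq_one_add_vecMulVec',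
        one_add_vecMulVec_mul_one_add_vecMulVec, add_assoc, ← vecMulVec_add,
        single_add_update_zero]
      simp [hpa.symm]

variable (I) in
def congruenceSubgroup : Subgroup SL(n, R) :=
  (Matrix.SpecialLinearGroup.map (Ideal.Quotient.mk I)).ker

instance : (congruenceSubgroup I : Subgroup SL(n, R)).Normal := MonoidHom.normal_ker _

lemma mem_congruenceSubgroup_iff {g : SL(n, R)} :
    g ∈ congruenceSubgroup I ↔ ModI I (g : Matrix (Fin n) (Fin n) R) := by
  rw [congruenceSubgroup, MonoidHom.mem_ker, Matrix.SpecialLinearGroup.ext_iff]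
  simp [ModI, ← Ideal.Quotient.eq, one_apply, apply_ite, Ideal.Quotient.eq_zero_iff_mem]

lemma tSL_mem_congruenceSubgroup {i j : Fin n} (hij : i ≠ j) {s : R} (hs : s ∈ I) :
    tSL i j hij s ∈ congruenceSubgroup I := by
  rw [mem_congruenceSubgroup_iff, ModI, coe_tSL_eq_one_add_vecMulVec]
  intro a b
  rw [Matrix.add_apply, add_sub_cancel_left, vecMulVec_apply]
  exact I.mul_mem_right _ (by by_cases h : a = i <;> simp [h, hs])

lemma ElemLengthLE.mem_congruenceSubgroup {k : ℕ} {g : SL(n, R)} (hg : ElemLengthLE I k g) :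
    g ∈ congruenceSubgroup I := by
  obtain ⟨L, -, hLI, rfl⟩ := hg
  refine (congruenceSubgroup I).list_prod_mem fun x hx => ?_
  obtain ⟨i, j, hij, s, hs, rfl⟩ := hLI x hx
  exact tSL_mem_congruenceSubgroup hij hs

lemma isIUnimodular_smul_single_zero {g : SL(n + 1, R)} (hg : g ∈ congruenceSubgroup I) :
    IsIUnimodular I (g • (Pi.single 0 1 : Fin (n + 1) → R)) := by
  have hcol : g • (Pi.single 0 1 : Fin (n + 1) → R) =
      fun i => (g : Matrix (Fin (n + 1)) (Fin (n + 1)) R) i 0 := by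
    rw [Matrix.SpecialLinearGroup.smul_def, smul_eq_mulVec, mulVec_single_one]
    rfl
  rw [mem_congruenceSubgroup_iff] at hg
  refine ⟨fun i hi => ?_, fun i hi => ?_, ?_⟩
  · obtain rfl : i = 0 := Fin.ext hi
    simpa [hcol] using hg 0 0
  · simpa [hcol, one_apply, Fin.ext_iff, hi] using hg i 0
  · rw [Ideal.eq_top_iff_one]
    have h1 : (g⁻¹ • g • (Pi.single 0 1 : Fin (n + 1) → R)) 0 = 1 := by simp
    rw [Matrix.SpecialLinearGroup.smul_def, smul_eq_mulVec, mulVec, dotProduct] at h1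
    exact Ideal.mem_span_range_iff_exists_fun.2 ⟨_, h1⟩

lemma IsIUnimodular.exists_sum_mul_eq_one {a : Fin n → R} (ha : IsIUnimodular I a) :
    ∃ c : Fin n → R, ∑ i, c i * a i = 1 :=
  Ideal.mem_span_range_iff_exists_fun.1 (ha.2.2 ▸ Submodule.mem_top)

-- Row `p` of `P⁻¹`, minus `eₚ`, is the row operation clearing row `p` of `P`.
lemma exists_elemLengthLE_mul_row_eq_one {P : SL(n, R)} (hP : P ∈ congruenceSubgroup I)
    {p : Fin n} (hcol : P • (Pi.single p 1 : Fin n → R) = Pi.single p 1) :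
    ∃ B : SL(n, R), ElemLengthLE I (n - 1) B ∧
      (∀ j, ((B * P : SL(n, R)) : Matrix (Fin n) (Fin n) R) p j =
        (1 : Matrix (Fin n) (Fin n) R) p j) ∧
      (B * P) • (Pi.single p 1 : Fin n → R) = Pi.single p 1 := by
  obtain ⟨W, hW⟩ : ∃ W : Matrix (Fin n) (Fin n) R, ↑(P⁻¹) = W := ⟨_, rfl⟩
  have hWP : W * P = 1 := by
    rw [← hW, ← Matrix.SpecialLinearGroup.coe_mul, inv_mul_cancel,
      Matrix.SpecialLinearGroup.coe_one]
  have hWpp : W p p = 1 := by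
    have hWcol : P⁻¹ • (Pi.single p 1 : Fin n → R) = Pi.single p 1 := by
      rw [inv_smul_eq_iff, hcol]
    simpa [hW] using (smul_single_eq_single_iff _ p).1 hWcol p
  have hWI : ModI I W := hW ▸ mem_congruenceSubgroup_iff.1 (inv_mem hP)
  set y : Fin n → R := W p - Pi.single p 1
  obtain ⟨B, hB, hBy⟩ := exists_elemLengthLE_eq_one_add_single_vecMulVec (y := y) (p := p)
    (s := Finset.univ.erase p)
    (fun j => by simpa [y, one_apply, Pi.single_apply, eq_comm] using hWI p j)
    (by simp) (fun j hj => by simp_all [y])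
  refine ⟨B, by simpa [Finset.card_erase_of_mem] using hB, fun j => ?_, ?_⟩
  · have hrow : y ᵥ* (P : Matrix (Fin n) (Fin n) R) =
        (1 : Matrix (Fin n) (Fin n) R) p - P p := by
      rw [sub_vecMul, single_one_vecMul, ← hWP]
      rfl
    rw [Matrix.SpecialLinearGroup.coe_mul, hBy, add_mul, one_mul, vecMulVec_mul, hrow,
      Matrix.add_apply, vecMulVec_apply, Pi.single_eq_same, one_mul, Pi.sub_apply, add_sub_cancel]
  · rw [mul_smul, hcol, smul_eq_of_coe_eq_one_add_vecMulVec hBy]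
    simp [y, hWpp]

variable {m : ℕ}

lemma exists_elemLengthLE_smul_eq_snoc (hSR : SRCond (m + 1) I) {v : Fin (m + 2) → R}
    (hv : IsIUnimodular I v) :
    ∃ (A : SL(m + 2, R)) (a : Fin (m + 1) → R), ElemLengthLE I (2 * (m + 1)) A ∧
      IsIUnimodular I a ∧ A • v = Fin.snoc a (1 - a 0) := by
  obtain ⟨b, hbI, ha⟩ := hSR v hv
  set a : Fin (m + 1) → R := fun i => v i.castSucc + v (Fin.last _) * b i
  replace ha : IsIUnimodular I a := ha
  obtain ⟨c, hc⟩ := ha.exists_sum_mul_eq_one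
  have hδ : 1 - a 0 - v (Fin.last _) ∈ I :=
    I.sub_mem (by simpa using I.neg_mem (ha.1 0 rfl)) (hv.2.1 _ (by simp))
  -- add multiples of the last entry to the others, as prescribed by `SRₘ₊₁(I)`
  obtain ⟨A₁, hA₁, hA₁x⟩ := exists_elemLengthLE_eq_one_add_vecMulVec_single
    (x := Fin.snoc b 0) (q := Fin.last _) (s := Finset.univ.erase (Fin.last _))
    (fun i => Fin.lastCases (by simp) (by simpa using hbI) i) (by simp)
    (fun i hi => by simp_all)
  -- then replace the last entry by `1 - a 0`, using `∑ cᵢ aᵢ = 1`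
  obtain ⟨A₂, hA₂, hA₂y⟩ := exists_elemLengthLE_eq_one_add_single_vecMulVec
    (y := Fin.snoc ((1 - a 0 - v (Fin.last _)) • c) 0) (p := Fin.last _)
    (s := Finset.univ.erase (Fin.last _))
    (fun i => Fin.lastCases (by simp) (fun i => by simpa using I.mul_mem_right (c i) hδ) i)
    (by simp) (fun i hi => by simp_all)
  have h₁ : A₁ • v = Fin.snoc a (v (Fin.last _)) := by
    rw [smul_eq_of_coe_eq_one_add_vecMulVec hA₁x]
    ext i
    induction i using Fin.lastCases <;> simp [a, mul_comm]
  have h₂ : A₂ • (Fin.snoc a (v (Fin.last _)) : Fin (m + 2) → R) =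
      Fin.snoc a (1 - a 0) := by
    have hdot : (Fin.snoc ((1 - a 0 - v (Fin.last _)) • c) 0 : Fin (m + 2) → R) ⬝ᵥ
        Fin.snoc a (v (Fin.last _)) = 1 - a 0 - v (Fin.last _) := by
      simp [dotProduct, Fin.sum_univ_castSucc, mul_assoc, ← Finset.mul_sum, hc]
    rw [smul_eq_of_coe_eq_one_add_vecMulVec hA₂y, hdot]
    ext i
    induction i using Fin.lastCases <;> simp
  refine ⟨A₂ * A₁, a, ?_, ha, by rw [mul_smul, h₁, h₂]⟩
  simpa [two_mul, Finset.card_erase_of_mem] using hA₂.mul hA₁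

def conjTransvection (r : R) : SL(m + 2, R) :=
  (tSL 0 (Fin.last _) (Fin.last_pos).ne 1)⁻¹ * tSL (Fin.last _) 0 (Fin.last_pos).ne' r *
    tSL 0 (Fin.last _) (Fin.last_pos).ne 1

lemma conjTransvection_mem_congruenceSubgroup {r : R} (hr : r ∈ I) :
    conjTransvection (m := m) r ∈ congruenceSubgroup I := by
  simpa [conjTransvection] using Subgroup.Normal.conj_mem inferInstance _
    (tSL_mem_congruenceSubgroup _ hr) (tSL 0 (Fin.last (m + 1)) (Fin.last_pos).ne 1)⁻¹

lemma conjTransvection_inv_smul_snoc (a : Fin (m + 1) → R) :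
    (conjTransvection (m := m) (1 - a 0))⁻¹ • (Fin.snoc a (1 - a 0) : Fin (m + 2) → R) =
      (Fin.snoc (Function.update a 0 1) 0 : Fin (m + 2) → R) := by
  simp only [conjTransvection, _root_.mul_inv_rev, tSL_inv, mul_smul, tSL_smul]
  ext i
  induction i using Fin.lastCases with
  | last => simp
  | cast j =>
    obtain rfl | hj := eq_or_ne j 0
    · simp
    · simp [hj]

lemma exists_elemLengthLE_smul_snoc_update_eq_single {a : Fin (m + 1) → R}
    (ha : ∀ i ≠ 0, a i ∈ I) : ∃ B : SL(m + 2, R), ElemLengthLE I m B ∧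
      B • (Fin.snoc (Function.update a 0 1) 0 : Fin (m + 2) → R) = Pi.single 0 1 := by
  set w : Fin (m + 2) → R := Fin.snoc (Function.update a 0 1) 0
  have hw0 : w 0 = 1 := by simp [w]
  have hxI (i : Fin (m + 2)) : (Pi.single 0 1 - w : Fin (m + 2) → R) i ∈ I := by
    induction i using Fin.lastCases with
    | last => simp [w, (Fin.last_pos).ne']
    | cast j =>
      obtain rfl | hj := eq_or_ne j 0
      · simp [w]
      · simpa [w, hj, Fin.castSucc_ne_zero_iff] using I.neg_mem (ha j hj)
  obtain ⟨B, hB, hBx⟩ := exists_elemLengthLE_eq_one_add_vecMulVec_single hxI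
    (q := 0) (s := (Finset.univ.erase 0).erase (Fin.last _)) (by simp) fun i hi => by
      obtain rfl | rfl : i = Fin.last _ ∨ i = 0 := by simp at hi; tauto
      · simp [w, (Fin.last_pos).ne']
      · simp [hw0]
  refine ⟨B, by simpa [Finset.card_erase_of_mem, (Fin.last_pos).ne'] using hB, ?_⟩
  rw [smul_eq_of_coe_eq_one_add_vecMulVec hBx, single_one_dotProduct, hw0, one_smul,
    add_sub_cancel]

end

/-- Length count in the relative Bass–Kolster decomposition for `SL(n,R,I)`. -/
theorem bass_kolster_count {R : Type*} [CommRing R] (I : Ideal R) (n : ℕ) (hn : 3 ≤ n)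
    (hSR : SRCond (n - 1) I) (g : Matrix.SpecialLinearGroup (Fin n) R)
    (hg : ModI I (g : Matrix (Fin n) (Fin n) R)) :
    ∃ (La Lb : List (Matrix.SpecialLinearGroup (Fin n) R))
      (z h : Matrix.SpecialLinearGroup (Fin n) R) (r : R),
      r ∈ I ∧
      La.length ≤ 2 * (n - 1) ∧ (∀ x ∈ La, IsElemTransvectionI I x) ∧
      Lb.length ≤ 2 * (n - 1) - 1 ∧ (∀ x ∈ Lb, IsElemTransvectionI I x) ∧
      z = (tSL (⟨0, by omega⟩ : Fin n) ⟨n - 1, by omega⟩ (by simp; omega) 1)⁻¹ *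
            tSL (⟨n - 1, by omega⟩ : Fin n) ⟨0, by omega⟩ (by simp; omega) r *
            tSL (⟨0, by omega⟩ : Fin n) ⟨n - 1, by omega⟩ (by simp; omega) 1 ∧
      ModI I (h : Matrix (Fin n) (Fin n) R) ∧
      (∀ j : Fin n, (h : Matrix (Fin n) (Fin n) R) (⟨0, by omega⟩ : Fin n) j =
        (1 : Matrix (Fin n) (Fin n) R) (⟨0, by omega⟩ : Fin n) j) ∧
      (∀ i : Fin n, (h : Matrix (Fin n) (Fin n) R) i ⟨0, by omega⟩ =
        (1 : Matrix (Fin n) (Fin n) R) i ⟨0, by omega⟩) ∧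
      g = La.prod * z * Lb.prod * h := by
  obtain ⟨m, rfl⟩ : ∃ m, n = m + 2 := ⟨n - 2, by omega⟩
  have hgI : g ∈ congruenceSubgroup I := mem_congruenceSubgroup_iff.2 hg
  obtain ⟨A, a, hA, ha, hAg⟩ :=
    exists_elemLengthLE_smul_eq_snoc hSR (isIUnimodular_smul_single_zero hgI)
  obtain ⟨B, hB, hBa⟩ := exists_elemLengthLE_smul_snoc_update_eq_single
    fun i hi => ha.2.1 i (Fin.val_ne_zero_iff.2 hi)
  have hr : 1 - a 0 ∈ I := by simpa using I.neg_mem (ha.1 0 rfl)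
  set z := conjTransvection (m := m) (1 - a 0)
  set P := B * z⁻¹ * A * g
  have hP : P ∈ congruenceSubgroup I :=
    mul_mem (mul_mem (mul_mem hB.mem_congruenceSubgroup
        (inv_mem (conjTransvection_mem_congruenceSubgroup hr)))
      hA.mem_congruenceSubgroup) hgI
  have hPcol : P • (Pi.single 0 1 : Fin (m + 2) → R) = Pi.single 0 1 := by
    simp only [P, z, mul_smul, hAg, conjTransvection_inv_smul_snoc, hBa]
  obtain ⟨C, hC, hrow, hcol⟩ := exists_elemLengthLE_mul_row_eq_one hP hPcol
  obtain ⟨La, hLa, hLaI, hLa_prod⟩ := hA.inv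
  obtain ⟨Lb, hLb, hLbI, hLb_prod⟩ := (hC.mul hB).inv
  refine ⟨La, Lb, z, C * P, 1 - a 0, hr, by omega, hLaI, by omega, hLbI, rfl,
    mem_congruenceSubgroup_iff.1 (mul_mem hC.mem_congruenceSubgroup hP), hrow,
    (smul_single_eq_single_iff _ _).1 hcol, ?_⟩
  rw [hLa_prod, hLb_prod]
  simp only [P]
  group
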